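/- arXiv:1607.00973 — 4 statements merged into one kernel-verified Lean document; each statement's English description precedes it below -/
import Mathlib

section
/- Let n be a natural number and let τ : {0,1,…,n-1} → ℝ be a sequence of real values. Suppose there is a function m defined on indices k ≥ 1 such that for every k ≥ 1: (i) m(k) < k, (ii) τ(m(k)) ≤ τ(k), and (iii) τ(p) ≤ τ(k) for every index p with m(k) < p < k. Then τ is monotonically nondecreasing: τ(p) ≤ τ(k) whenever p ≤ k. -/
theorem monotoneOn_Iio_of_le_trigger {α : Type*} [Preorder α] {n : ℕ} {τ : ℕ → α} {m : ℕ → ℕ}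
    (hm : ∀ k, 1 ≤ k → k < n → m k < k)
    (hτm : ∀ k, 1 ≤ k → k < n → τ (m k) ≤ τ k)
    (hfront : ∀ k, 1 ≤ k → k < n → ∀ p, m k < p → p < k → τ p ≤ τ k) :
    MonotoneOn τ (Set.Iio n) := by
  rintro p - k (hkn : k < n) hpk
  induction k using Nat.strong_induction_on generalizing p with
  | _ k ih =>
    obtain rfl | hpk := hpk.eq_or_lt
    · exact le_rfl
    have hk : 1 ≤ k := Nat.one_le_of_lt hpk
    by_cases hp : m k < p
    · exact hfront k hk hkn p hp hpk
    · have hmk := hm k hk hkn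
      calc τ p ≤ τ (m k) := ih (m k) hmk (hmk.trans hkn) (not_lt.mp hp)
        _ ≤ τ k := hτm k hk hkn

/-- The combinatorial core of the monotonicity lemma for Fast Marching:
if every finalized index `k ≥ 1` has a "trigger" index `m k < k` with
`τ (m k) ≤ τ k`, and every intermediate index `p` with `m k < p < k`
satisfies `τ p ≤ τ k`, then `τ` is monotonically nondecreasing on `{0,…,n-1}`. -/
theorem fast_marching_monotone (n : ℕ) (τ : ℕ → ℝ) (m : ℕ → ℕ)
    (hm : ∀ k, 1 ≤ k → k < n → m k < k)
    (hτm : ∀ k, 1 ≤ k → k < n → τ (m k) ≤ τ k)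
    (hfront : ∀ k, 1 ≤ k → k < n → ∀ p, m k < p → p < k → τ p ≤ τ k) :
    ∀ p k, p ≤ k → k < n → τ p ≤ τ k := fun _ _ hpk hkn =>
  monotoneOn_Iio_of_le_trigger hm hτm hfront (hpk.trans_lt hkn) hkn hpk
end

section
/- Let E be the Euclidean space ℝ^d (d ≥ 1), let x0 ∈ E, and let τ0(x) = ‖x − x0‖. Suppose τ1 : E → ℝ is continuously differentiable on a neighborhood U of x0 with τ1(x0) ≥ 0, and suppose κ : E → ℝ is continuous at x0 with κ(x0) ≥ 0. If the function τ = τ0·τ1 satisfies the eikonal equation ‖∇τ(x)‖² = κ(x)² for every x ∈ U with x ≠ x0, then τ1(x0) = κ(x0). -/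
/-!
Away from `x0`, the product rule gives
`D(τ0 τ1) = τ0 • Dτ1 + τ1 • Dτ0`, where `Dτ0` is the derivative of a norm, hence of operator
norm one. The first term is `O(‖x - x0‖)`, so `‖∇(τ0 τ1)(x)‖ → |τ1 x0|` as `x → x0`, `x ≠ x0`.
Passing to the limit in the eikonal equation gives `|τ1 x0|² = κ x0²`, and both sides are
nonnegative.
-/

open Filter Topology InnerProductSpace

section DistanceFactor

variable {E : Type*} [NormedAddCommGroup E] [InnerProductSpace ℝ E]

lemma norm_gradient_eq_norm_fderiv [CompleteSpace E] (f : E → ℝ) (x : E) :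
    ‖gradient f x‖ = ‖fderiv ℝ f x‖ := by
  rw [← toDual_gradient, LinearIsometryEquiv.norm_map]

lemma hasFDerivAt_norm_sub {x x0 : E} (hx : x ≠ x0) :
    HasFDerivAt (fun y => ‖y - x0‖) (fderiv ℝ (‖·‖) (x - x0)) x := by
  have hnorm : DifferentiableAt ℝ (‖·‖) (x - x0) :=
    (contDiffAt_norm ℝ (sub_ne_zero.mpr hx)).differentiableAt one_ne_zero
  exact hnorm.hasFDerivAt.comp x ((hasFDerivAt_id x).sub_const x0)

lemma dist_abs_norm_fderiv_norm_sub_mul_le {f : E → ℝ} {f' : E →L[ℝ] ℝ} {x x0 : E}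
    (hx : x ≠ x0) (hf : HasFDerivAt f f' x) :
    dist |f x| ‖fderiv ℝ (fun y => ‖y - x0‖ * f y) x‖ ≤ ‖x - x0‖ * ‖f'‖ := by
  have : Nontrivial E := nontrivial_of_ne x x0 hx
  set D := fderiv ℝ (‖·‖) (x - x0)
  have hD : ‖D‖ = 1 :=
    norm_fderiv_norm ((contDiffAt_norm ℝ (sub_ne_zero.mpr hx)).differentiableAt one_ne_zero)
  have hprod : fderiv ℝ (fun y => ‖y - x0‖ * f y) x = ‖x - x0‖ • f' + f x • D :=
    ((hasFDerivAt_norm_sub hx).mul hf).fderiv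
  have hfD : ‖f x • D‖ = |f x| := by rw [norm_smul, hD, mul_one, Real.norm_eq_abs]
  have h := abs_norm_sub_norm_le (‖x - x0‖ • f' + f x • D) (f x • D)
  rwa [add_sub_cancel_right, hfD, norm_smul, norm_norm, ← hprod, ← Real.dist_eq,
    dist_comm] at h

lemma tendsto_norm_fderiv_norm_sub_mul {f : E → ℝ} {x0 : E} (hf : ContDiffAt ℝ 1 f x0) :
    Tendsto (fun x => ‖fderiv ℝ (fun y => ‖y - x0‖ * f y) x‖) (𝓝[≠] x0) (𝓝 |f x0|) := by
  obtain ⟨f', ⟨u, hu, hf'⟩, hf'_cont⟩ :=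
    contDiffAt_succ_iff_hasFDerivAt.mp (by simpa using hf : ContDiffAt ℝ (0 + 1) f x0)
  have hbound : ∀ᶠ x in 𝓝[≠] x0,
      dist |f x| ‖fderiv ℝ (fun y => ‖y - x0‖ * f y) x‖ ≤ ‖x - x0‖ * ‖f' x‖ := by
    filter_upwards [nhdsWithin_le_nhds hu, self_mem_nhdsWithin] with x hxu hx
    exact dist_abs_norm_fderiv_norm_sub_mul_le hx (hf' x hxu)
  have hbound_lim : Tendsto (fun x => ‖x - x0‖ * ‖f' x‖) (𝓝[≠] x0) (𝓝 0) := by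
    have h : ContinuousAt (fun x => ‖x - x0‖ * ‖f' x‖) x0 := by
      fun_prop (disch := exact hf'_cont.continuousAt)
    simpa using h.tendsto.mono_left nhdsWithin_le_nhds
  have habs : Tendsto (fun x => |f x|) (𝓝[≠] x0) (𝓝 |f x0|) :=
    hf.continuousAt.abs.tendsto.mono_left nhdsWithin_le_nhds
  exact habs.congr_dist (squeeze_zero' (.of_forall fun _ => dist_nonneg) hbound hbound_lim)

end DistanceFactor

/-- Initialization of factored Fast Marching: with `τ0(x) = ‖x − x0‖` and `τ1`
continuously differentiable on a neighborhood `U` of `x0` with `τ1 x0 ≥ 0`, if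
`τ = τ0 ⬝ τ1` satisfies the eikonal equation `‖∇τ(x)‖² = κ(x)²` for all
`x ∈ U`, `x ≠ x0`, where `κ` is continuous at `x0` with `κ x0 ≥ 0`, then
`τ1 x0 = κ x0`. -/
theorem factored_initialization (d : ℕ) (hd : 1 ≤ d)
    (x0 : EuclideanSpace ℝ (Fin d)) (τ1 κ : EuclideanSpace ℝ (Fin d) → ℝ)
    (U : Set (EuclideanSpace ℝ (Fin d))) (hU : U ∈ nhds x0)
    (hτ1 : ContDiffOn ℝ 1 τ1 U) (hτ1pos : 0 ≤ τ1 x0)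
    (hκ : ContinuousAt κ x0) (hκpos : 0 ≤ κ x0)
    (heik : ∀ x ∈ U, x ≠ x0 →
      ‖gradient (fun y => ‖y - x0‖ * τ1 y) x‖ ^ 2 = κ x ^ 2) :
    τ1 x0 = κ x0 := by
  have : Nonempty (Fin d) := ⟨⟨0, hd⟩⟩
  have hlhs : Tendsto (fun x => ‖gradient (fun y => ‖y - x0‖ * τ1 y) x‖ ^ 2) (𝓝[≠] x0)
      (𝓝 (τ1 x0 ^ 2)) := by
    simp only [norm_gradient_eq_norm_fderiv]
    simpa using (tendsto_norm_fderiv_norm_sub_mul (hτ1.contDiffAt hU)).pow 2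
  have hrhs : Tendsto (fun x => κ x ^ 2) (𝓝[≠] x0) (𝓝 (κ x0 ^ 2)) :=
    (hκ.pow 2).tendsto.mono_left nhdsWithin_le_nhds
  have heik' : ∀ᶠ x in 𝓝[≠] x0, ‖gradient (fun y => ‖y - x0‖ * τ1 y) x‖ ^ 2 = κ x ^ 2 := by
    filter_upwards [nhdsWithin_le_nhds hU, self_mem_nhdsWithin] with x hxU hx
    exact heik x hxU hx
  have hsq : τ1 x0 ^ 2 = κ x0 ^ 2 := tendsto_nhds_unique (hlhs.congr' heik') hrhs
  exact (sq_eq_sq₀ hτ1pos hκpos).mp hsq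
end

section
/- Let K be a finite nonempty index set, let α_k > 0 and β_k ≥ 0 for each k ∈ K, and let κ > 0. Then there exists a unique real number t satisfying ∑_{k∈K} max(α_k(t − β_k), 0)² = κ², and this t satisfies min_{k∈K} β_k < t ≤ min_{k∈K} (β_k + κ/α_k). -/
/-!
The left-hand side `f` is continuous, vanishes for `t ≤ minₖ βₖ`, and is strictly increasing
from there on, because the term of a minimizing `k` is. A single term already equals `κ²` at
`βₖ + κ/αₖ`, so the intermediate value theorem gives a solution and strict monotonicity makes it
unique. Since every term is at most `f t = κ²`, each `αₖ (t - βₖ) ≤ κ`, which is the upper bound.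
-/

open Set

noncomputable section

namespace PiecewiseQuadratic

def hingeSq (a b t : ℝ) : ℝ := max (a * (t - b)) 0 ^ 2

def hingeSqSum {K : Type*} [Fintype K] (α β : K → ℝ) (t : ℝ) : ℝ :=
  ∑ k, hingeSq (α k) (β k) t

section Term

variable {a b : ℝ}

theorem continuous_hingeSq : Continuous (hingeSq a b) := by
  unfold hingeSq
  fun_prop

theorem hingeSq_eq_zero {t : ℝ} (ha : 0 ≤ a) (ht : t ≤ b) : hingeSq a b t = 0 := by
  rw [hingeSq, max_eq_right (mul_nonpos_of_nonneg_of_nonpos ha (sub_nonpos.2 ht))]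
  norm_num

theorem hingeSq_monotone (ha : 0 ≤ a) : Monotone (hingeSq a b) := fun _ _ hst =>
  pow_le_pow_left₀ (le_max_right _ _)
    (max_le_max (mul_le_mul_of_nonneg_left (sub_le_sub_right hst b) ha) le_rfl) 2

theorem hingeSq_strictMonoOn (ha : 0 < a) : StrictMonoOn (hingeSq a b) (Ici b) := by
  intro s hs t _ hst
  have hs' : 0 ≤ a * (s - b) := mul_nonneg ha.le (sub_nonneg.2 hs)
  have hst' : a * (s - b) < a * (t - b) := mul_lt_mul_of_pos_left (sub_lt_sub_right hst b) ha
  rw [hingeSq, hingeSq, max_eq_left hs', max_eq_left (hs'.trans hst'.le)]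
  exact pow_lt_pow_left₀ hst' hs' two_ne_zero

theorem hingeSq_add_div {c : ℝ} (ha : 0 < a) (hc : 0 ≤ c) :
    hingeSq a b (b + c / a) = c ^ 2 := by
  rw [hingeSq, add_sub_cancel_left, mul_div_cancel₀ c ha.ne', max_eq_left hc]

theorem le_add_div_of_hingeSq_le {c t : ℝ} (ha : 0 < a) (hc : 0 ≤ c)
    (h : hingeSq a b t ≤ c ^ 2) : t ≤ b + c / a := by
  have hmul : a * (t - b) ≤ c :=
    (le_max_left _ _).trans ((pow_le_pow_iff_left₀ (le_max_right _ _) hc two_ne_zero).1 h)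
  rw [← sub_le_iff_le_add', le_div_iff₀ ha, mul_comm]
  exact hmul

end Term

section Sum

variable {K : Type*} [Fintype K] {α β : K → ℝ}

theorem continuous_hingeSqSum : Continuous (hingeSqSum α β) :=
  continuous_finsetSum _ fun _ _ => continuous_hingeSq

theorem hingeSqSum_eq_zero {t : ℝ} (hα : ∀ k, 0 ≤ α k) (ht : ∀ k, t ≤ β k) :
    hingeSqSum α β t = 0 :=
  Finset.sum_eq_zero fun k _ => hingeSq_eq_zero (hα k) (ht k)

theorem hingeSq_le_hingeSqSum (k : K) (t : ℝ) : hingeSq (α k) (β k) t ≤ hingeSqSum α β t :=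
  Finset.single_le_sum (f := fun k => hingeSq (α k) (β k) t) (fun _ _ => sq_nonneg _)
    (Finset.mem_univ k)

theorem hingeSqSum_strictMonoOn (hα : ∀ k, 0 ≤ α k) {k₀ : K} (hk₀ : 0 < α k₀) :
    StrictMonoOn (hingeSqSum α β) (Ici (β k₀)) := fun _ hs _ ht hst =>
  Finset.sum_lt_sum (fun k _ => hingeSq_monotone (hα k) hst.le)
    ⟨k₀, Finset.mem_univ _, hingeSq_strictMonoOn hk₀ hs ht hst⟩

end Sum

end PiecewiseQuadratic

end

open PiecewiseQuadratic in
theorem piecewise_quadratic_unique_solution_general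
    (K : Type*) [Fintype K] [Nonempty K] (α β : K → ℝ)
    (hα : ∀ k, 0 < α k) (κ : ℝ) (hκ : 0 < κ) :
    (∃! t : ℝ, ∑ k, max (α k * (t - β k)) 0 ^ 2 = κ ^ 2) ∧
    ∀ t : ℝ, (∑ k, max (α k * (t - β k)) 0 ^ 2 = κ ^ 2) →
      Finset.univ.inf' Finset.univ_nonempty β < t ∧
      t ≤ Finset.univ.inf' Finset.univ_nonempty (fun k => β k + κ / α k) := by
  change (∃! t, hingeSqSum α β t = κ ^ 2) ∧ ∀ t, hingeSqSum α β t = κ ^ 2 → _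
  have hα' : ∀ k, 0 ≤ α k := fun k => (hα k).le
  obtain ⟨k₀, -, hk₀⟩ := Finset.exists_mem_eq_inf' Finset.univ_nonempty β
  have hmin : ∀ k, β k₀ ≤ β k := fun k => hk₀ ▸ Finset.inf'_le _ (Finset.mem_univ k)
  have hsol_gt : ∀ t, hingeSqSum α β t = κ ^ 2 → β k₀ < t := by
    intro t ht
    by_contra! h
    rw [hingeSqSum_eq_zero hα' fun k => h.trans (hmin k)] at ht
    exact (pow_pos hκ 2).ne ht
  have hsol_exists : ∃ t, hingeSqSum α β t = κ ^ 2 := by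
    have hle : β k₀ ≤ β k₀ + κ / α k₀ := le_add_of_nonneg_right (div_pos hκ (hα k₀)).le
    obtain ⟨t, -, ht⟩ := intermediate_value_Icc hle continuous_hingeSqSum.continuousOn
      ⟨(hingeSqSum_eq_zero hα' hmin).symm ▸ sq_nonneg κ,
        hingeSq_add_div (hα k₀) hκ.le ▸ hingeSq_le_hingeSqSum k₀ _⟩
    exact ⟨t, ht⟩
  have hsol_le : ∀ t, hingeSqSum α β t = κ ^ 2 →
      t ≤ Finset.univ.inf' Finset.univ_nonempty (fun k => β k + κ / α k) := fun t ht =>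
    Finset.le_inf' _ _ fun k _ =>
      le_add_div_of_hingeSq_le (hα k) hκ.le (ht ▸ hingeSq_le_hingeSqSum k t)
  obtain ⟨t, ht⟩ := hsol_exists
  have hinj := (hingeSqSum_strictMonoOn (β := β) hα' (hα k₀)).injOn
  exact ⟨⟨t, ht, fun s hs => hinj (hsol_gt s hs).le (hsol_gt t ht).le (hs.trans ht.symm)⟩,
    fun s hs => ⟨hk₀ ▸ hsol_gt s hs, hsol_le s hs⟩⟩

/-- Solvability, uniqueness and causality bounds for the piecewise quadratic
local update equation `∑ₖ max(αₖ(t − βₖ), 0)² = κ²` of the Fast Marching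
algorithm, with `αₖ > 0`, `βₖ ≥ 0` and `κ > 0`: it has a unique real solution
`t`, and this `t` satisfies `minₖ βₖ < t ≤ minₖ (βₖ + κ/αₖ)`. -/
theorem piecewise_quadratic_unique_solution
    (K : Type*) [Fintype K] [Nonempty K] (α β : K → ℝ)
    (hα : ∀ k, 0 < α k) (hβ : ∀ k, 0 ≤ β k) (κ : ℝ) (hκ : 0 < κ) :
    (∃! t : ℝ, ∑ k, max (α k * (t - β k)) 0 ^ 2 = κ ^ 2) ∧
    ∀ t : ℝ, (∑ k, max (α k * (t - β k)) 0 ^ 2 = κ ^ 2) →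
      Finset.univ.inf' Finset.univ_nonempty β < t ∧
      t ≤ Finset.univ.inf' Finset.univ_nonempty (fun k => β k + κ / α k) :=
  piecewise_quadratic_unique_solution_general K α β hα κ hκ
end

section
/- Let E be the Euclidean space ℝ^d with its standard inner product, let x0 ∈ E, let e ∈ E be a unit vector, and let a, s0 be real numbers. Define κ²(x) = s0² + 2a⟨e, x − x0⟩, S̄²(x) = s0² + a⟨e, x − x0⟩, σ(x) = sqrt( 2‖x − x0‖² / ( S̄²(x) + sqrt( S̄²(x)² − a²‖x − x0‖² ) ) ), and τ(x) = S̄²(x)·σ(x) − (1/6)a²σ(x)³. Then at every point x of the open set U = { x : x ≠ x0, s0² + 2a⟨e, x − x0⟩ > 0, and S̄²(x)² > a²‖x − x0‖² }, the function τ is differentiable and satisfies the eikonal equation ‖∇τ(x)‖² = s0² + 2a⟨e, x − x0⟩ = κ(x)². -/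
/-! With `u = x − x0`, `S = S̄²(x)` and `R = ‖u‖²`, the quantity `t = σ²` is the smaller root of
`a²t²/4 − S t + R = 0`. Implicit differentiation gives `√(S² − a²R) ∇t = ∇R − t ∇S`, and
substituting into `τ = Sσ − a²σ³/6` yields `∇τ = (σ/2) ∇S + (1/(2σ)) ∇R = (aσ/2) e + u/σ`.
Hence `‖∇τ‖² = a²t/4 + a⟪e, u⟫ + R/t`, and the quadratic equation divided by `t` reads
`a²t/4 + R/t = S`, so `‖∇τ‖² = S + a⟪e, u⟫ = κ²`. -/

open RealInnerProductSpace

/-- `S̄²(x) = s0² + a ⟪e, x − x0⟫`. -/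
noncomputable def Sbar2 {d : ℕ} (x0 e : EuclideanSpace ℝ (Fin d))
    (a s0 : ℝ) (x : EuclideanSpace ℝ (Fin d)) : ℝ :=
  s0 ^ 2 + a * ⟪e, x - x0⟫

/-- `σ(x) = sqrt( 2‖x − x0‖² / ( S̄²(x) + sqrt( S̄²(x)² − a²‖x − x0‖² ) ) )`. -/
noncomputable def sigmaFun {d : ℕ} (x0 e : EuclideanSpace ℝ (Fin d))
    (a s0 : ℝ) (x : EuclideanSpace ℝ (Fin d)) : ℝ :=
  Real.sqrt (2 * ‖x - x0‖ ^ 2 /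
    (Sbar2 x0 e a s0 x +
      Real.sqrt ((Sbar2 x0 e a s0 x) ^ 2 - a ^ 2 * ‖x - x0‖ ^ 2)))

/-- The exact travel time `τ(x) = S̄²(x)·σ(x) − (1/6)a²σ(x)³` for a medium with
constant gradient of the squared slowness. -/
noncomputable def tauCase1 {d : ℕ} (x0 e : EuclideanSpace ℝ (Fin d))
    (a s0 : ℝ) (x : EuclideanSpace ℝ (Fin d)) : ℝ :=
  Sbar2 x0 e a s0 x * sigmaFun x0 e a s0 x -
    (1 / 6) * a ^ 2 * (sigmaFun x0 e a s0 x) ^ 3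

/-- The smaller root of `a²t²/4 − s t + r = 0`, rationalised so that it stays defined at `a = 0`. -/
noncomputable def sigmaSq (a s r : ℝ) : ℝ := 2 * r / (s + √(s ^ 2 - a ^ 2 * r))

noncomputable def travelTime (a s r : ℝ) : ℝ :=
  s * √(sigmaSq a s r) - 1 / 6 * a ^ 2 * √(sigmaSq a s r) ^ 3

section
variable {a s r : ℝ}

theorem sigmaSq_pos (hs : 0 < s) (hr : 0 < r) : 0 < sigmaSq a s r := by
  unfold sigmaSq; positivity

theorem sq_mul_sigmaSq (hs : 0 < s) (hq : a ^ 2 * r ≤ s ^ 2) :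
    a ^ 2 * sigmaSq a s r = 2 * (s - √(s ^ 2 - a ^ 2 * r)) := by
  have hD2 := Real.sq_sqrt (sub_nonneg.2 hq)
  have hM : 0 < s + √(s ^ 2 - a ^ 2 * r) := by positivity
  unfold sigmaSq
  field_simp
  linear_combination hD2

theorem sq_mul_sigmaSq_div_four_add_div_sigmaSq (hs : 0 < s) (hr : 0 < r)
    (hq : a ^ 2 * r ≤ s ^ 2) :
    a ^ 2 * sigmaSq a s r / 4 + r / sigmaSq a s r = s := by
  have hM : 0 < s + √(s ^ 2 - a ^ 2 * r) := by positivity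
  have hdiv : r / sigmaSq a s r = (s + √(s ^ 2 - a ^ 2 * r)) / 2 := by
    unfold sigmaSq; field_simp
  rw [sq_mul_sigmaSq hs hq, hdiv]; ring

end

section
variable {F : Type*} [NormedAddCommGroup F] [NormedSpace ℝ F] {s r : F → ℝ}
  {s' r' : F →L[ℝ] ℝ} {x : F} {a : ℝ}

/-- Implicit differentiation of `a²t²/4 − s t + r = 0`, where `∂ₜ = a²t/2 − s = −√(s² − a²r)`. -/
theorem hasFDerivAt_sigmaSq (hs : HasFDerivAt s s' x) (hr : HasFDerivAt r r' x)
    (hs0 : 0 < s x) (hq : a ^ 2 * r x < s x ^ 2) :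
    HasFDerivAt (fun y => sigmaSq a (s y) (r y))
      ((√(s x ^ 2 - a ^ 2 * r x))⁻¹ • (r' - sigmaSq a (s x) (r x) • s')) x := by
  unfold sigmaSq
  have hq' : 0 < s x ^ 2 - a ^ 2 * r x := by linarith
  have hDfun := ((hs.pow 2).fun_sub (hr.const_mul (a ^ 2))).sqrt hq'.ne'
  have hD2 : √(s x ^ 2 - a ^ 2 * r x) ^ 2 = s x ^ 2 - a ^ 2 * r x := Real.sq_sqrt hq'.le
  have hD : 0 < √(s x ^ 2 - a ^ 2 * r x) := Real.sqrt_pos.2 hq'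
  have hM : s x + √(s x ^ 2 - a ^ 2 * r x) ≠ 0 := by positivity
  have hinv := (hasDerivAt_inv hM).comp_hasFDerivAt x (hs.fun_add hDfun)
  refine ((hr.const_mul 2).fun_mul hinv).congr_fderiv ?_
  simp only [Function.comp_apply]
  generalize √(s x ^ 2 - a ^ 2 * r x) = D at hD hD2 hM ⊢
  ext v
  simp only [one_div, mul_inv_rev, Nat.add_one_sub_one, pow_one, nsmul_eq_mul, Nat.cast_ofNat,
    smul_add, neg_smul, smul_neg, add_apply, neg_apply, smul_apply, smul_eq_mul, sub_apply]
  field_simp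
  linear_combination r' v * hD2

theorem hasFDerivAt_travelTime (hs : HasFDerivAt s s' x) (hr : HasFDerivAt r r' x)
    (hs0 : 0 < s x) (hr0 : 0 < r x) (hq : a ^ 2 * r x < s x ^ 2) :
    HasFDerivAt (fun y => travelTime a (s y) (r y))
      ((√(sigmaSq a (s x) (r x)) / 2) • s' + (2 * √(sigmaSq a (s x) (r x)))⁻¹ • r') x := by
  have ht := sigmaSq_pos (a := a) hs0 hr0
  have hat := sq_mul_sigmaSq hs0 hq.le
  have hD : 0 < √(s x ^ 2 - a ^ 2 * r x) := Real.sqrt_pos.2 (by linarith)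
  have hσ := (hasFDerivAt_sigmaSq hs hr hs0 hq).sqrt ht.ne'
  refine (hs.fun_mul hσ).fun_sub ((hσ.pow 3).const_mul _) |>.congr_fderiv ?_
  have hσ2 := Real.sq_sqrt ht.le
  have hσ0 := Real.sqrt_pos.2 ht
  ext v
  simp only [one_div, mul_inv_rev, Nat.add_one_sub_one, nsmul_eq_mul, Nat.cast_ofNat, sub_apply,
    add_apply, smul_apply, smul_eq_mul]
  generalize √(sigmaSq a (s x) (r x)) = σ at hσ2 hσ0 ⊢
  generalize √(s x ^ 2 - a ^ 2 * r x) = D at hat hD ⊢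
  generalize sigmaSq a (s x) (r x) = t at hat hσ2 ⊢
  subst hσ2
  field_simp
  linear_combination -3 * (r' v - σ ^ 2 * s' v) * hat

end

theorem hasFDerivAt_Sbar2 {d : ℕ} (x0 e : EuclideanSpace ℝ (Fin d)) (a s0 : ℝ)
    (x : EuclideanSpace ℝ (Fin d)) : HasFDerivAt (Sbar2 x0 e a s0) (a • innerSL ℝ e) x :=
  (((innerSL ℝ e).hasFDerivAt.comp x ((hasFDerivAt_id x).sub_const x0)).const_mul a).const_add _

/-- Test case 1 (constant gradient of squared slowness): on the open set where
`x ≠ x0`, `s0² + 2a⟪e, x − x0⟫ > 0` and `S̄²(x)² > a²‖x − x0‖²`, the function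
`τ` is differentiable and satisfies the eikonal equation
`‖∇τ(x)‖² = s0² + 2a⟪e, x − x0⟫ = κ(x)²`. -/
theorem eikonal_constant_gradient_squared_slowness (d : ℕ)
    (x0 e : EuclideanSpace ℝ (Fin d)) (he : ‖e‖ = 1) (a s0 : ℝ) :
    ∀ x : EuclideanSpace ℝ (Fin d), x ≠ x0 →
      s0 ^ 2 + 2 * a * ⟪e, x - x0⟫ > 0 →
      (Sbar2 x0 e a s0 x) ^ 2 > a ^ 2 * ‖x - x0‖ ^ 2 →
      DifferentiableAt ℝ (tauCase1 x0 e a s0) x ∧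
      ‖gradient (tauCase1 x0 e a s0) x‖ ^ 2 = s0 ^ 2 + 2 * a * ⟪e, x - x0⟫ := by
  intro x hx hK hq
  have hS : 0 < Sbar2 x0 e a s0 x := by unfold Sbar2; linarith [sq_nonneg s0]
  have hR : 0 < ‖x - x0‖ ^ 2 := by have := sub_ne_zero.2 hx; positivity
  have ht := sigmaSq_pos (a := a) hS hR
  set σ := √(sigmaSq a (Sbar2 x0 e a s0 x) (‖x - x0‖ ^ 2))
  have hσ2 : σ ^ 2 = sigmaSq a (Sbar2 x0 e a s0 x) (‖x - x0‖ ^ 2) := Real.sq_sqrt ht.le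
  have hσ0 : 0 < σ := Real.sqrt_pos.2 ht
  have hgrad : HasGradientAt (tauCase1 x0 e a s0) ((a * σ / 2) • e + σ⁻¹ • (x - x0)) x := by
    rw [hasGradientAt_iff_hasFDerivAt]
    -- `tauCase1 x0 e a s0` unfolds to `fun y ↦ travelTime a (Sbar2 x0 e a s0 y) ‖y - x0‖²`.
    refine (hasFDerivAt_travelTime (hasFDerivAt_Sbar2 x0 e a s0 x)
      ((hasFDerivAt_id x).sub_const x0).norm_sq hS hR hq).congr_fderiv ?_
    ext v
    simp only [id_eq, mul_inv_rev, map_sub, ContinuousLinearMap.comp_id, add_apply, smul_apply,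
      coe_innerSL_apply, smul_eq_mul, sub_apply, nsmul_eq_mul, Nat.cast_ofNat, map_add, map_smul,
      InnerProductSpace.toDual_apply_apply]
    field_simp
    ring
  refine ⟨hgrad.differentiableAt, ?_⟩
  have hquad := sq_mul_sigmaSq_div_four_add_div_sigmaSq hS hR hq.le
  rw [← hσ2] at hquad
  unfold Sbar2 at hquad
  field_simp at hquad
  rw [hgrad.gradient, norm_add_sq_real, norm_smul, norm_smul, he, real_inner_smul_left,
    real_inner_smul_right]
  simp only [Real.norm_eq_abs, mul_pow, div_pow, inv_pow, sq_abs]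
  field_simp
  linear_combination hquad
end
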